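/- arXiv:1907.03231 — 2 statements merged into one kernel-verified Lean document; each statement's English description precedes it below -/
import Mathlib

section
/- In the finite-state setting with M_{t+1} = W_{t+1} - E[W_{t+1}|F_t], if the F_t-measurable row vector Z_t ∈ R^{1×N} satisfies Z_t M_{t+1} = Z̃_t M_{t+1} a.s. for some F_t-measurable Z̃_t, then the components of Z_t - Z̃_t are all equal: Z_t^1 - Z̃_t^1 = Z_t^2 - Z̃_t^2 = ... = Z_t^N - Z̃_t^N almost surely. -/
open Finset Matrix

section Setup

variable {Ω : Type*} [Fintype Ω] [DecidableEq Ω] {N : ℕ}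

/-- A probability on a finite sample space with everywhere-positive weights. -/
structure FinProb (Ω : Type*) [Fintype Ω] where
  p : Ω → ℝ
  pos : ∀ ω, 0 < p ω
  sum_one : ∑ ω, p ω = 1

/-- `ω` and `ω'` share the same `W`-path up to time `t` (the atoms of `F_t`). -/
def samePath (W : ℕ → Ω → Fin N) (t : ℕ) (ω ω' : Ω) : Prop :=
  ∀ s ∈ Finset.range (t + 1), W s ω = W s ω'

instance (W : ℕ → Ω → Fin N) (t : ℕ) (ω ω' : Ω) : Decidable (samePath W t ω ω') := by
  unfold samePath; infer_instance

/-- `F_t`-measurability: `f` is constant on the atoms of `F_t`. -/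
def measF (W : ℕ → Ω → Fin N) (t : ℕ) {α : Type*} (f : Ω → α) : Prop :=
  ∀ ω ω', samePath W t ω ω' → f ω = f ω'

/-- Conditional expectation given `F_t`. -/
noncomputable def cexp (P : FinProb Ω) (W : ℕ → Ω → Fin N) (t : ℕ)
    {E : Type*} [AddCommGroup E] [Module ℝ E] (Y : Ω → E) (ω : Ω) : E :=
  (∑ ω' ∈ univ.filter (fun ω' => samePath W t ω ω'), P.p ω')⁻¹ •
    ∑ ω' ∈ univ.filter (fun ω' => samePath W t ω ω'), P.p ω' • Y ω'

/-- The basis-vector valued process `W_t ∈ {e_1,…,e_N} ⊆ ℝ^N`. -/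
def wvec (W : ℕ → Ω → Fin N) (t : ℕ) (ω : Ω) : Fin N → ℝ :=
  fun j => if W t ω = j then 1 else 0

/-- `M_{t+1} = W_{t+1} - E[W_{t+1} | F_t]` (indexed so that `Mdiff P W t` is `M_{t+1}`). -/
noncomputable def Mdiff (P : FinProb Ω) (W : ℕ → Ω → Fin N) (t : ℕ) (ω : Ω) : Fin N → ℝ :=
  wvec W (t + 1) ω - cexp P W t (wvec W (t + 1)) ω

/-- One-step conditional transition probability `P_t^k = e_k^* E[W_{t+1}|F_t]`. -/
noncomputable def Pt (P : FinProb Ω) (W : ℕ → Ω → Fin N) (t : ℕ) (k : Fin N) (ω : Ω) : ℝ :=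
  cexp P W t (fun ω' => wvec W (t + 1) ω' k) ω

/-- The `N × (N-1)` matrix `Ĩ` whose top block is the identity and last row is all `-1`. -/
def Itil (n : ℕ) : Matrix (Fin (n + 1)) (Fin n) ℝ :=
  fun i j => if (i : ℕ) = (j : ℕ) then 1 else if (i : ℕ) = n then -1 else 0

end Setup


section Aux

variable {Ω : Type*} [Fintype Ω] [DecidableEq Ω] {N : ℕ}

lemma samePath_symm {W : ℕ → Ω → Fin N} {t : ℕ} {ω ω' : Ω}
    (h : samePath W t ω ω') : samePath W t ω' ω := fun s hs => (h s hs).symm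

lemma samePath_trans {W : ℕ → Ω → Fin N} {t : ℕ} {ω ω' ω'' : Ω}
    (h : samePath W t ω ω') (h' : samePath W t ω' ω'') : samePath W t ω ω'' :=
  fun s hs => (h s hs).trans (h' s hs)

lemma filter_samePath_eq {W : ℕ → Ω → Fin N} {t : ℕ} {ω ω' : Ω}
    (h : samePath W t ω ω') :
    univ.filter (fun ω'' => samePath W t ω ω'') =
      univ.filter (fun ω'' => samePath W t ω' ω'') := by
  ext ω''
  simp only [mem_filter, mem_univ, true_and]
  exact ⟨fun h2 => samePath_trans (samePath_symm h) h2, fun h2 => samePath_trans h h2⟩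

lemma cexp_measF (P : FinProb Ω) (W : ℕ → Ω → Fin N) (t : ℕ)
    {E : Type*} [AddCommGroup E] [Module ℝ E] (Y : Ω → E) :
    measF W t (cexp P W t Y) := by
  intro ω ω' h
  unfold cexp
  rw [filter_samePath_eq h]

lemma cexp_apply (P : FinProb Ω) (W : ℕ → Ω → Fin N) (t : ℕ)
    (Y : Ω → Fin N → ℝ) (ω : Ω) (k : Fin N) :
    cexp P W t Y ω k = cexp P W t (fun ω' => Y ω' k) ω := by
  unfold cexp
  simp [Finset.sum_apply]

lemma exists_state (P : FinProb Ω) (W : ℕ → Ω → Fin N) (t : ℕ) (k : Fin N) (ω : Ω)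
    (hpos : 0 < Pt P W t k ω) :
    ∃ ω', samePath W t ω ω' ∧ W (t + 1) ω' = k := by
  by_contra hcon
  push_neg at hcon
  have hz : Pt P W t k ω = 0 := by
    unfold Pt cexp
    have h0 : (∑ ω' ∈ univ.filter (fun ω' => samePath W t ω ω'),
        P.p ω' • (fun ω'' => wvec W (t + 1) ω'' k) ω') = 0 := by
      apply Finset.sum_eq_zero
      intro ω' hω'
      simp only [mem_filter, mem_univ, true_and] at hω'
      have := hcon ω' hω'
      simp [wvec, this]
    rw [h0, smul_zero]
  exact absurd hz (ne_of_gt hpos)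

/-- The key identity: `v ⬝ M_{t+1}(ω) = v_{W_{t+1}(ω)} - ∑ k, v_k P_t^k(ω)`. -/
lemma dot_Mdiff (P : FinProb Ω) (W : ℕ → Ω → Fin N) (t : ℕ) (v : Fin N → ℝ) (ω : Ω) :
    dotProduct v (Mdiff P W t ω) = v (W (t + 1) ω) - ∑ k, v k * Pt P W t k ω := by
  unfold Mdiff dotProduct
  have h1 : ∀ k, v k * (wvec W (t + 1) ω - cexp P W t (wvec W (t + 1)) ω) k
      = v k * wvec W (t + 1) ω k - v k * Pt P W t k ω := by
    intro k
    rw [Pi.sub_apply, mul_sub, cexp_apply]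
    rfl
  simp only [h1, Finset.sum_sub_distrib]
  congr 1
  simp [wvec, mul_ite]

end Aux

/-- if `Z_t M_{t+1} = Z̃_t M_{t+1}` then the components of `Z_t - Z̃_t` coincide. -/
theorem stmt1 {Ω : Type*} [Fintype Ω] [DecidableEq Ω] {n : ℕ}
    (P : FinProb Ω) (W : ℕ → Ω → Fin (n + 1)) (t : ℕ)
    (hpos : ∀ k ω, 0 < Pt P W t k ω)
    (Z Z' : Ω → Fin (n + 1) → ℝ)
    (hZ : measF W t Z) (hZ' : measF W t Z')
    (heq : ∀ ω, dotProduct (Z ω) (Mdiff P W t ω) = dotProduct (Z' ω) (Mdiff P W t ω)) :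
    ∀ ω i j, Z ω i - Z' ω i = Z ω j - Z' ω j := by
  have key : ∀ ω k, Z ω k - Z' ω k
      = ∑ l, (Z ω l - Z' ω l) * Pt P W t l ω := by
    intro ω k
    obtain ⟨ω', hsp, hW⟩ := exists_state P W t k ω (hpos k ω)
    have hD : ∀ l, Z ω' l - Z' ω' l = Z ω l - Z' ω l := by
      intro l; rw [hZ ω ω' hsp, hZ' ω ω' hsp]
    have hPt : ∀ l, Pt P W t l ω' = Pt P W t l ω := by
      intro l; exact (cexp_measF P W t (fun ω'' => wvec W (t + 1) ω'' l) ω ω' hsp).symm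
    have h0 : dotProduct (fun l => Z ω' l - Z' ω' l) (Mdiff P W t ω') = 0 := by
      have := heq ω'
      simp only [dotProduct, sub_mul, Finset.sum_sub_distrib] at this ⊢
      rw [this]; ring
    rw [dot_Mdiff, hW, sub_eq_zero] at h0
    calc Z ω k - Z' ω k = Z ω' k - Z' ω' k := (hD k).symm
      _ = ∑ l, (Z ω' l - Z' ω' l) * Pt P W t l ω' := h0
      _ = ∑ l, (Z ω l - Z' ω l) * Pt P W t l ω := by
          apply Finset.sum_congr rfl; intro l _; rw [hD l, hPt l]
  intro ω i j
  rw [key ω i, key ω j]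
end

section
/- (Uniqueness in martingale representation.) Under the finite-state assumption, if F_t-measurable Z_t, Z̃_t ∈ R^{K×N} both satisfy Y - E[Y|F_t] = Z_t M_{t+1} = Z̃_t M_{t+1} for an F_{t+1}-measurable Y, then Z_t Ĩ = Z̃_t Ĩ, i.e., Z_t and Z̃_t are equal up to adding an F_t-measurable vector times the all-ones row. -/
open Finset Matrix

section Aux

variable {Ω : Type*} [Fintype Ω] [DecidableEq Ω] {N : ℕ}

lemma atom_congr (W : ℕ → Ω → Fin N) (t : ℕ) {ω ω' : Ω} (h : samePath W t ω ω') :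
    univ.filter (fun x => samePath W t ω x) = univ.filter (fun x => samePath W t ω' x) := by
  ext x
  simp only [mem_filter, mem_univ, true_and]
  constructor
  · intro hx s hs; rw [← h s hs]; exact hx s hs
  · intro hx s hs; rw [h s hs]; exact hx s hs

lemma cexp_congr (P : FinProb Ω) (W : ℕ → Ω → Fin N) (t : ℕ)
    {E : Type*} [AddCommGroup E] [Module ℝ E] (Y : Ω → E) {ω ω' : Ω}
    (h : samePath W t ω ω') : cexp P W t Y ω = cexp P W t Y ω' := by
  unfold cexp
  rw [atom_congr W t h]

lemma exists_atom (P : FinProb Ω) (W : ℕ → Ω → Fin N) (t : ℕ) (k : Fin N) (ω : Ω)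
    (h : 0 < Pt P W t k ω) : ∃ ω', samePath W t ω ω' ∧ W (t + 1) ω' = k := by
  by_contra hc
  push_neg at hc
  have hzero : Pt P W t k ω = 0 := by
    have hs : ∑ ω' ∈ univ.filter (fun ω' => samePath W t ω ω'),
        P.p ω' • (fun ω' => wvec W (t + 1) ω' k) ω' = 0 := by
      apply Finset.sum_eq_zero
      intro x hx
      simp only [mem_filter, mem_univ, true_and] at hx
      have := hc x hx
      simp [wvec, this]
    unfold Pt cexp
    rw [hs, smul_zero]
  linarith

end Aux


/-- uniqueness in the martingale representation, up to `∼_{M_{t+1}}`. -/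
theorem stmt6 {Ω : Type*} [Fintype Ω] [DecidableEq Ω] {n K : ℕ}
    (P : FinProb Ω) (W : ℕ → Ω → Fin (n + 1)) (t : ℕ)
    (hpos : ∀ k ω, 0 < Pt P W t k ω)
    (Y : Ω → Fin K → ℝ) (hY : measF W (t + 1) Y)
    (Z Z' : Ω → Matrix (Fin K) (Fin (n + 1)) ℝ)
    (hZ : measF W t Z) (hZ' : measF W t Z')
    (hrep : ∀ ω, (fun i => Y ω i - cexp P W t Y ω i) = (Z ω).mulVec (Mdiff P W t ω))
    (hrep' : ∀ ω, (fun i => Y ω i - cexp P W t Y ω i) = (Z' ω).mulVec (Mdiff P W t ω)) :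
    ∀ ω, Z ω * Itil n = Z' ω * Itil n := by
  intro ω
  set c := cexp P W t (wvec W (t + 1)) ω with hc
  have key : ∀ (k : Fin (n + 1)) (i : Fin K),
      Z ω i k - Z' ω i k = (Z ω).mulVec c i - (Z' ω).mulVec c i := by
    intro k i
    obtain ⟨ω', hsp, hw⟩ := exists_atom P W t k ω (hpos k ω)
    have hZe : Z ω = Z ω' := hZ ω ω' hsp
    have hZe' : Z' ω = Z' ω' := hZ' ω ω' hsp
    have heq : (Z ω).mulVec (Mdiff P W t ω') = (Z' ω).mulVec (Mdiff P W t ω') := by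
      rw [hZe, hZe', ← hrep ω', ← hrep' ω']
    have hM : Mdiff P W t ω' = (fun j => if k = j then (1 : ℝ) else 0) - c := by
      unfold Mdiff
      rw [← cexp_congr P W t (wvec W (t + 1)) hsp, ← hc]
      congr 1
      funext j
      simp [wvec, hw]
    rw [hM] at heq
    have hind : ∀ (A : Matrix (Fin K) (Fin (n + 1)) ℝ),
        A.mulVec (fun j => if k = j then (1 : ℝ) else 0) i = A i k := by
      intro A
      simp [Matrix.mulVec, dotProduct, mul_ite]
    have h1 := congrFun heq i
    simp only [Matrix.mulVec_sub, Pi.sub_apply] at h1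
    rw [hind, hind] at h1
    linarith
  ext i j
  have hj := j.isLt
  have hItil : ∀ l : Fin (n + 1), Itil n l j =
      (if l = (⟨(j : ℕ), by omega⟩ : Fin (n + 1)) then (1 : ℝ) else 0) +
      (if l = (⟨n, by omega⟩ : Fin (n + 1)) then (-1 : ℝ) else 0) := by
    intro l
    simp only [Itil, Fin.ext_iff]
    split_ifs <;> simp_all <;> omega
  have hsum : ∑ l : Fin (n + 1), Itil n l j = 0 := by
    simp [hItil, Finset.sum_add_distrib]
  have hdiff : (Z ω * Itil n) i j - (Z' ω * Itil n) i j = 0 := by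
    simp only [Matrix.mul_apply]
    rw [← Finset.sum_sub_distrib]
    have hterm : ∀ l : Fin (n + 1), Z ω i l * Itil n l j - Z' ω i l * Itil n l j
        = ((Z ω).mulVec c i - (Z' ω).mulVec c i) * Itil n l j := by
      intro l
      rw [← key l i]
      ring
    rw [Finset.sum_congr rfl (fun l _ => hterm l), ← Finset.mul_sum, hsum, mul_zero]
  linarith
end
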